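/- arXiv:1603.02867 — 2 statements merged into one kernel-verified Lean document; each statement's English description precedes it below -/
import Mathlib

section
/- Let W be a convex normal integrand on ℝ^n × Ω. If for every y ∈ dom EW the univariate normal integrand h(η,ω) := W(η·y(ω), ω) satisfies condition (RAE+), then λ·dom EW ⊆ dom EW for every λ ≥ 1. If for every y ∈ dom EW the integrand h(η,ω) := W(η·y(ω), ω) satisfies condition (RAE−), then λ·dom EW ⊆ dom EW for every λ ∈ (0,1]. -/
open MeasureTheory Finset
open scoped ENNReal NNReal

noncomputable section

namespace IlliquidALM

/-- `EReal` to `ℝ≥0∞`: the positive part. -/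
def etoENNReal (x : EReal) : ℝ≥0∞ := if x = ⊤ then ⊤ else ENNReal.ofReal x.toReal

/-- Extended-real expectation with the convention that it equals `+∞` unless the
positive part is integrable. -/
def eExp {Ω : Type*} [MeasurableSpace Ω] (P : Measure Ω) (f : Ω → EReal) : EReal :=
  if ∫⁻ ω, etoENNReal (f ω) ∂P = ⊤ then ⊤
  else ((∫⁻ ω, etoENNReal (f ω) ∂P).toEReal - (∫⁻ ω, etoENNReal (-f ω) ∂P).toEReal)

/-- Convexity of an extended-real-valued function. -/
def EConvexOn {α : Type*} [AddCommMonoid α] [Module ℝ α] (f : α → EReal) : Prop :=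
  ∀ x y : α, ∀ a b : ℝ, 0 ≤ a → 0 ≤ b → a + b = 1 →
    f (a • x + b • y) ≤ (a : EReal) * f x + (b : EReal) * f y

/-- Joint measurability of an integrand (w.r.t. the ambient σ-algebra). -/
def JointlyMeasurable {Ω α : Type*} [MeasurableSpace α] [MeasurableSpace Ω]
    (f : α → Ω → EReal) : Prop :=
  Measurable fun p : α × Ω => f p.1 p.2

/-- Condition (RAE+) for a univariate normal integrand `h` on `ℝ × Ω`. -/
def RAEplus {Ω : Type*} [MeasurableSpace Ω] (P : Measure Ω) (h : ℝ → Ω → EReal) : Prop :=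
  ∃ l : ℝ, 1 < l ∧ ∃ ybar : Ω → ℝ, Measurable ybar ∧
    eExp P (fun ω => h (ybar ω) ω) ≠ ⊤ ∧
    ∃ C : ℝ, 0 ≤ C ∧ ∀ᵐ ω ∂P, ∀ η : ℝ, ybar ω ≤ η →
      h (l * η) ω ≤ (C : EReal) * h η ω

/-- Condition (RAE−) for a univariate normal integrand `h` on `ℝ × Ω`. -/
def RAEminus {Ω : Type*} [MeasurableSpace Ω] (P : Measure Ω) (h : ℝ → Ω → EReal) : Prop :=
  ∃ l : ℝ, 0 < l ∧ l < 1 ∧ ∃ ybar : Ω → ℝ, Measurable ybar ∧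
    eExp P (fun ω => h (ybar ω) ω) ≠ ⊤ ∧
    ∃ C : ℝ, 0 < C ∧ ∀ᵐ ω ∂P, ∀ η : ℝ, 0 ≤ η → η ≤ ybar ω →
      h (l * η) ω ≤ (C : EReal) * h η ω

end IlliquidALM

/-!
Fix `y ∈ dom EW` and `ω`, and let `f η = W (η • y ω) ω`, a convex function of `η`. Iterating the
growth bound `k` times from `η₀ = max ȳ(ω) 1` (resp. `min ȳ(ω) 1`) reaches a point beyond `l`
(resp. below it), and convexity bounds `f(l)⁺` by the values at `1` and at that point. Since `k`
depends only on `l` and the elasticity constant, `W(l • y)⁺ ≤ (1 + Cᵏ) (W(ȳ • y)⁺ + W(y)⁺)`,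
which is integrable because `ȳ • y` and `y` lie in `dom EW`.
-/

namespace IlliquidALM

lemma etoENNReal_mono : Monotone etoENNReal := by
  intro x y h
  rcases eq_or_ne y ⊤ with rfl | hy
  · simp [etoENNReal]
  rcases eq_or_ne x ⊥ with rfl | hx
  · simp [etoENNReal]
  have hx' : x ≠ ⊤ := ne_top_of_le_ne_top hy h
  simp only [etoENNReal, if_neg hx', if_neg hy]
  exact ENNReal.ofReal_le_ofReal (EReal.toReal_le_toReal h hx hy)

lemma etoENNReal_coe (x : ℝ) : etoENNReal x = ENNReal.ofReal x := by
  simp [etoENNReal]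

lemma etoENNReal_add_le (x y : EReal) :
    etoENNReal (x + y) ≤ etoENNReal x + etoENNReal y := by
  induction x <;> induction y <;> simp [etoENNReal, ← EReal.coe_add, ENNReal.ofReal_add_le]

lemma etoENNReal_coe_mul_le {c : ℝ} (hc : 0 ≤ c) (x : EReal) :
    etoENNReal (c * x) ≤ ENNReal.ofReal c * etoENNReal x := by
  rcases hc.eq_or_lt with rfl | hc
  · simp [etoENNReal]
  induction x with
  | bot => simp [EReal.coe_mul_bot_of_pos hc, etoENNReal]
  | top =>
    simp [EReal.coe_mul_top_of_pos hc, etoENNReal, ENNReal.mul_top, hc]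
  | coe x => rw [← EReal.coe_mul, etoENNReal_coe, etoENNReal_coe, ENNReal.ofReal_mul hc.le]

lemma measurable_etoENNReal : Measurable etoENNReal :=
  Measurable.ite (measurableSet_singleton ⊤) measurable_const
    (ENNReal.measurable_ofReal.comp measurable_ereal_toReal)

lemma eExp_ne_top_iff {Ω : Type*} [MeasurableSpace Ω] (P : Measure Ω) (f : Ω → EReal) :
    eExp P f ≠ ⊤ ↔ ∫⁻ ω, etoENNReal (f ω) ∂P ≠ ⊤ := by
  unfold eExp
  split_ifs with h
  · simp [h]
  · simp only [ne_eq, h, not_false_eq_true, iff_true]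
    rw [sub_eq_add_neg]
    refine (EReal.add_lt_top ?_ ?_).ne
    · rwa [ne_eq, EReal.coe_ennreal_eq_top_iff]
    · simp [EReal.neg_eq_top_iff]

lemma EConvexOn.comp_smul_const {E : Type*} [AddCommGroup E] [Module ℝ E] {f : E → EReal}
    (hf : EConvexOn f) (v : E) : EConvexOn fun η : ℝ => f (η • v) := by
  intro x y a b ha hb hab
  simpa [smul_smul, add_smul] using hf (x • v) (y • v) a b ha hb hab

lemma EConvexOn.etoENNReal_le_add {f : ℝ → EReal} (hf : EConvexOn f) {p t q : ℝ}
    (hpt : p ≤ t) (htq : t ≤ q) :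
    etoENNReal (f t) ≤ etoENNReal (f p) + etoENNReal (f q) := by
  rcases hpt.eq_or_lt with rfl | hpt'
  · exact le_self_add
  have hd : 0 < q - p := by linarith
  set a := (q - t) / (q - p)
  set b := (t - p) / (q - p)
  have ha : 0 ≤ a := div_nonneg (by linarith) hd.le
  have hb : 0 ≤ b := div_nonneg (by linarith) hd.le
  have hab : a + b = 1 := by
    rw [← add_div, div_eq_one_iff_eq hd.ne']; ring
  have ht : a • p + b • q = t := by simp only [a, b, smul_eq_mul]; field_simp; ring
  calc etoENNReal (f t) ≤ etoENNReal (a * f p + b * f q) :=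
        etoENNReal_mono (ht ▸ hf p q a b ha hb hab)
    _ ≤ ENNReal.ofReal a * etoENNReal (f p) + ENNReal.ofReal b * etoENNReal (f q) :=
        (etoENNReal_add_le _ _).trans
          (add_le_add (etoENNReal_coe_mul_le ha _) (etoENNReal_coe_mul_le hb _))
    _ ≤ etoENNReal (f p) + etoENNReal (f q) := by
        gcongr <;> exact mul_le_of_le_one_left' (ENNReal.ofReal_le_one.mpr (by linarith))

lemma etoENNReal_pow_mul_le {f : ℝ → EReal} {c C x : ℝ} (hC : 0 ≤ C)
    (hstep : ∀ j : ℕ, f (c * (c ^ j * x)) ≤ C * f (c ^ j * x)) (k : ℕ) :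
    etoENNReal (f (c ^ k * x)) ≤ ENNReal.ofReal C ^ k * etoENNReal (f x) := by
  induction k with
  | zero => simp
  | succ k ih =>
    calc etoENNReal (f (c ^ (k + 1) * x)) = etoENNReal (f (c * (c ^ k * x))) := by ring_nf
      _ ≤ ENNReal.ofReal C * etoENNReal (f (c ^ k * x)) :=
          (etoENNReal_mono (hstep k)).trans (etoENNReal_coe_mul_le hC _)
      _ ≤ ENNReal.ofReal C ^ (k + 1) * etoENNReal (f x) := by
          rw [pow_succ', mul_assoc]; gcongr

lemma apply_max_le_add {α β : Type*} [LinearOrder α] [AddCommMonoid β] [PartialOrder β]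
    [CanonicallyOrderedAdd β] (g : α → β) (a b : α) : g (max a b) ≤ g a + g b := by
  rcases le_total a b with h | h
  · rw [max_eq_right h]; exact le_add_self
  · rw [max_eq_left h]; exact le_self_add

lemma apply_min_le_add {α β : Type*} [LinearOrder α] [AddCommMonoid β] [PartialOrder β]
    [CanonicallyOrderedAdd β] (g : α → β) (a b : α) : g (min a b) ≤ g a + g b := by
  rcases le_total a b with h | h
  · rw [min_eq_left h]; exact le_self_add
  · rw [min_eq_right h]; exact le_add_self

lemma EConvexOn.etoENNReal_le_of_growth_ge {f : ℝ → EReal} (hf : EConvexOn f)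
    {c C ybar l : ℝ} {k : ℕ} (hc : 1 ≤ c) (hC : 0 ≤ C)
    (hgrowth : ∀ η, ybar ≤ η → f (c * η) ≤ C * f η) (hl : 1 ≤ l) (hk : l ≤ c ^ k) :
    etoENNReal (f l) ≤ (1 + ENNReal.ofReal C ^ k) * (etoENNReal (f ybar) + etoENNReal (f 1)) := by
  set η₀ := max ybar 1
  have hη₀ : 1 ≤ η₀ := le_max_right _ _
  have horbit : ∀ j : ℕ, ybar ≤ c ^ j * η₀ := fun j =>
    (le_max_left _ _).trans (le_mul_of_one_le_left (by linarith) (one_le_pow₀ hc))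
  have hfar : l ≤ c ^ k * η₀ :=
    hk.trans (le_mul_of_one_le_right (by positivity) hη₀)
  calc etoENNReal (f l) ≤ etoENNReal (f 1) + etoENNReal (f (c ^ k * η₀)) :=
        EConvexOn.etoENNReal_le_add hf hl hfar
    _ ≤ etoENNReal (f 1) + ENNReal.ofReal C ^ k * (etoENNReal (f ybar) + etoENNReal (f 1)) := by
        gcongr
        exact (etoENNReal_pow_mul_le hC (fun j => hgrowth _ (horbit j)) k).trans
          (by gcongr; exact apply_max_le_add (etoENNReal ∘ f) ybar 1)
    _ ≤ (1 + ENNReal.ofReal C ^ k) * (etoENNReal (f ybar) + etoENNReal (f 1)) := by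
        rw [add_mul, one_mul]; gcongr; exact le_add_self

lemma EConvexOn.etoENNReal_le_of_growth_le {f : ℝ → EReal} (hf : EConvexOn f)
    {c C ybar l : ℝ} {k : ℕ} (hc₀ : 0 ≤ c) (hc₁ : c ≤ 1) (hC : 0 ≤ C)
    (hgrowth : ∀ η, 0 ≤ η → η ≤ ybar → f (c * η) ≤ C * f η) (hl₀ : 0 ≤ l) (hl₁ : l ≤ 1)
    (hk : c ^ k ≤ l) :
    etoENNReal (f l) ≤ (1 + ENNReal.ofReal C ^ k) * (etoENNReal (f ybar) + etoENNReal (f 1)) := by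
  rcases le_total ybar l with hyl | hly
  -- when `ybar ≤ l`, convexity between `ybar` and `1` suffices and no iteration is needed
  · exact (EConvexOn.etoENNReal_le_add hf hyl hl₁).trans
      (le_mul_of_one_le_left zero_le le_self_add)
  set η₀ := min ybar 1
  have hlη₀ : l ≤ η₀ := le_min hly hl₁
  have horbit : ∀ j : ℕ, 0 ≤ c ^ j * η₀ ∧ c ^ j * η₀ ≤ ybar := fun j =>
    ⟨by have := hl₀.trans hlη₀; positivity,
      (mul_le_of_le_one_left (hl₀.trans hlη₀) (pow_le_one₀ hc₀ hc₁)).trans (min_le_left _ _)⟩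
  have hnear : c ^ k * η₀ ≤ l :=
    (mul_le_of_le_one_right (by positivity) (min_le_right _ _)).trans hk
  calc etoENNReal (f l) ≤ etoENNReal (f (c ^ k * η₀)) + etoENNReal (f 1) :=
        EConvexOn.etoENNReal_le_add hf hnear hl₁
    _ ≤ ENNReal.ofReal C ^ k * (etoENNReal (f ybar) + etoENNReal (f 1)) + etoENNReal (f 1) := by
        gcongr
        exact (etoENNReal_pow_mul_le hC (fun j => hgrowth _ (horbit j).1 (horbit j).2) k).trans
          (by gcongr; exact apply_min_le_add (etoENNReal ∘ f) ybar 1)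
    _ ≤ (1 + ENNReal.ofReal C ^ k) * (etoENNReal (f ybar) + etoENNReal (f 1)) := by
        rw [add_mul, one_mul, add_comm]; gcongr; exact le_add_self

section Integrands

variable {Ω E : Type*} [MeasurableSpace Ω] {P : Measure Ω}
  [AddCommGroup E] [Module ℝ E] [MeasurableSpace E] [MeasurableSMul₂ ℝ E]
  {W : E → Ω → EReal}

lemma eExp_ne_top_of_ae_le {f g₁ g₂ : Ω → EReal} {K : ℝ≥0∞} (hK : K ≠ ⊤)
    (hg₁ : Measurable g₁) (h₁ : eExp P g₁ ≠ ⊤) (h₂ : eExp P g₂ ≠ ⊤)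
    (hle : ∀ᵐ ω ∂P, etoENNReal (f ω) ≤ K * (etoENNReal (g₁ ω) + etoENNReal (g₂ ω))) :
    eExp P f ≠ ⊤ := by
  rw [eExp_ne_top_iff] at h₁ h₂ ⊢
  refine ne_top_of_le_ne_top ?_ (lintegral_mono_ae hle)
  rw [lintegral_const_mul' _ _ hK, lintegral_add_left (f := fun ω => etoENNReal (g₁ ω))
    (measurable_etoENNReal.comp hg₁)]
  exact ENNReal.mul_ne_top hK (ENNReal.add_ne_top.mpr ⟨h₁, h₂⟩)

lemma JointlyMeasurable.comp_smul (hW : JointlyMeasurable W) {a : Ω → ℝ} {y : Ω → E}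
    (ha : Measurable a) (hy : Measurable y) : Measurable fun ω => W (a ω • y ω) ω :=
  hW.comp ((ha.smul hy).prodMk measurable_id)

theorem eExp_smul_ne_top_of_RAEplus (hWmeas : JointlyMeasurable W)
    (hWconv : ∀ᵐ ω ∂P, EConvexOn fun x => W x ω) {y : Ω → E} (hy : Measurable y)
    (hdom : eExp P (fun ω => W (y ω) ω) ≠ ⊤) (hRAE : RAEplus P fun η ω => W (η • y ω) ω)
    {l : ℝ} (hl : 1 ≤ l) : eExp P (fun ω => W (l • y ω) ω) ≠ ⊤ := by
  obtain ⟨c, hc, ybar, hybar, hybardom, C, hC, hgrowth⟩ := hRAE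
  obtain ⟨k, hk⟩ := pow_unbounded_of_one_lt l hc
  refine eExp_ne_top_of_ae_le (K := 1 + ENNReal.ofReal C ^ k) (by simp)
    (JointlyMeasurable.comp_smul hWmeas hybar hy) hybardom hdom ?_
  filter_upwards [hWconv, hgrowth] with ω hconv hgrowth
  simpa only [one_smul] using
    EConvexOn.etoENNReal_le_of_growth_ge (EConvexOn.comp_smul_const hconv (y ω))
      hc.le hC hgrowth hl hk.le

theorem eExp_smul_ne_top_of_RAEminus (hWmeas : JointlyMeasurable W)
    (hWconv : ∀ᵐ ω ∂P, EConvexOn fun x => W x ω) {y : Ω → E} (hy : Measurable y)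
    (hdom : eExp P (fun ω => W (y ω) ω) ≠ ⊤) (hRAE : RAEminus P fun η ω => W (η • y ω) ω)
    {l : ℝ} (hl₀ : 0 < l) (hl₁ : l ≤ 1) : eExp P (fun ω => W (l • y ω) ω) ≠ ⊤ := by
  obtain ⟨c, hc₀, hc₁, ybar, hybar, hybardom, C, hC, hgrowth⟩ := hRAE
  obtain ⟨k, hk⟩ := exists_pow_lt_of_lt_one hl₀ hc₁
  refine eExp_ne_top_of_ae_le (K := 1 + ENNReal.ofReal C ^ k) (by simp)
    (JointlyMeasurable.comp_smul hWmeas hybar hy) hybardom hdom ?_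
  filter_upwards [hWconv, hgrowth] with ω hconv hgrowth
  simpa only [one_smul] using
    EConvexOn.etoENNReal_le_of_growth_le (EConvexOn.comp_smul_const hconv (y ω))
      hc₀.le hc₁.le hC.le hgrowth hl₀.le hl₁ hk.le

end Integrands

theorem radial_asymptotic_elasticity_general
    {Ω : Type*} [MeasurableSpace Ω] (P : Measure Ω)
    (n : ℕ) (W : (Fin n → ℝ) → Ω → EReal)
    (hWmeas : JointlyMeasurable W)
    (hWconv : ∀ᵐ ω ∂P, EConvexOn fun x => W x ω) :
    ((∀ y : Ω → Fin n → ℝ, Measurable y → eExp P (fun ω => W (y ω) ω) ≠ ⊤ →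
        RAEplus P fun η ω => W (η • y ω) ω) →
      ∀ l : ℝ, 1 ≤ l → ∀ y : Ω → Fin n → ℝ, Measurable y →
        eExp P (fun ω => W (y ω) ω) ≠ ⊤ →
        eExp P (fun ω => W (l • y ω) ω) ≠ ⊤) ∧
    ((∀ y : Ω → Fin n → ℝ, Measurable y → eExp P (fun ω => W (y ω) ω) ≠ ⊤ →
        RAEminus P fun η ω => W (η • y ω) ω) →
      ∀ l : ℝ, 0 < l → l ≤ 1 → ∀ y : Ω → Fin n → ℝ, Measurable y →
        eExp P (fun ω => W (y ω) ω) ≠ ⊤ →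
        eExp P (fun ω => W (l • y ω) ω) ≠ ⊤) :=
  ⟨fun hRAE _ hl y hy hdom =>
      eExp_smul_ne_top_of_RAEplus hWmeas hWconv hy hdom (hRAE y hy hdom) hl,
    fun hRAE _ hl₀ hl₁ y hy hdom =>
      eExp_smul_ne_top_of_RAEminus hWmeas hWconv hy hdom (hRAE y hy hdom) hl₀ hl₁⟩

/-- Lemma 4.1 / `lem:rrae`: the multivariate radial asymptotic
elasticity conditions imply stability of `dom EW` under scaling. -/
theorem radial_asymptotic_elasticity
    {Ω : Type*} [MeasurableSpace Ω] (P : Measure Ω) [IsProbabilityMeasure P]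
    (n : ℕ) (W : (Fin n → ℝ) → Ω → EReal)
    (hWmeas : JointlyMeasurable W)
    (hWlsc : ∀ᵐ ω ∂P, LowerSemicontinuous fun x => W x ω)
    (hWconv : ∀ᵐ ω ∂P, EConvexOn fun x => W x ω) :
    ((∀ y : Ω → Fin n → ℝ, Measurable y → eExp P (fun ω => W (y ω) ω) ≠ ⊤ →
        RAEplus P fun η ω => W (η • y ω) ω) →
      ∀ l : ℝ, 1 ≤ l → ∀ y : Ω → Fin n → ℝ, Measurable y →
        eExp P (fun ω => W (y ω) ω) ≠ ⊤ →
        eExp P (fun ω => W (l • y ω) ω) ≠ ⊤) ∧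
    ((∀ y : Ω → Fin n → ℝ, Measurable y → eExp P (fun ω => W (y ω) ω) ≠ ⊤ →
        RAEminus P fun η ω => W (η • y ω) ω) →
      ∀ l : ℝ, 0 < l → l ≤ 1 → ∀ y : Ω → Fin n → ℝ, Measurable y →
        eExp P (fun ω => W (y ω) ω) ≠ ⊤ →
        eExp P (fun ω => W (l • y ω) ω) ≠ ⊤) :=
  radial_asymptotic_elasticity_general P n W hWmeas hWconv

end IlliquidALM
end
end

section
/- Let D ⊆ E be a closed convex set containing the origin, let p ∈ E, and define π(c) := inf{α ∈ ℝ : c − αp ∈ D}. Then the following conditions are equivalent: (1) π is proper and lower semicontinuous; (2) π(0) > −∞; (3) p ∉ D^∞; (4) there exists q ∈ F with σ_D(q) < ∞ and ⟨p,q⟩ = 1. Moreover, these conditions imply the dual representation π(c) = sup{ ⟨c,q⟩ − σ_D(q) : q ∈ F, ⟨p,q⟩ = 1 } for every c ∈ E. -/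
/-!
Write `L t := D + (-∞, t] • p`, so that `{π < t} ⊆ L t ⊆ {π ≤ t}`. The value `π 0` is `-∞`
exactly when the whole ray `ℝ₊ p` lies in `D`, which for a closed convex set containing `0` means
`p ∈ D^∞`; in that case every `q` with `⟨p, q⟩ = 1` has `σ_D(q) = ∞`, and otherwise separating some
`a • p ∉ D` from `D` produces such a `q` with `σ_D(q) < ∞`.

Given such a `q`, the functional `⟨·, q⟩` bounds the shift `a` of any witness `x - a • p ∈ D`
from below near a given point, so locally `L t` is a closed set plus a compact segment of the ray,
hence weakly closed. This gives lower semicontinuity, and separating `c` from `L t` for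
`t < π c` gives a functional that, after tilting `q` towards it and renormalizing, shows
`⟨c, q'⟩ - σ_D(q') > t`.
-/

open MeasureTheory

noncomputable section

namespace IlliquidALM

/-- Recession cone of a set. -/
def recCone {α : Type*} [Add α] [SMul ℝ α] (C : Set α) : Set α :=
  {z | ∀ d ∈ C, ∀ a : ℝ, 0 < a → d + a • z ∈ C}

/-- The function `π(c) = inf {α ∈ ℝ | c − αp ∈ D}`. -/
def piD {E : Type*} [AddCommGroup E] [Module ℝ E] (Dset : Set E) (p : E)
    (c : E) : EReal :=
  ⨅ a : {a : ℝ // c - a • p ∈ Dset}, (a.1 : EReal)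

/-- The support function of `D ⊆ E` w.r.t. the pairing `B`. -/
def sigmaD {E F : Type*} [AddCommGroup E] [Module ℝ E] [AddCommGroup F] [Module ℝ F]
    (B : E →ₗ[ℝ] F →ₗ[ℝ] ℝ) (Dset : Set E) (q : F) : EReal :=
  ⨆ c : Dset, ((B c.1 q : ℝ) : EReal)

open Filter Topology Set
open scoped Pointwise

/-- `D + (-∞, t] • p` -/
def piDSublevel {E : Type*} [AddCommGroup E] [Module ℝ E] (Dset : Set E) (p : E) (t : ℝ) :
    Set E :=
  {x | ∃ a ≤ t, x - a • p ∈ Dset}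

section Module

variable {E : Type*} [AddCommGroup E] [Module ℝ E] {Dset : Set E} {p : E}

theorem convex_piDSublevel (hconv : Convex ℝ Dset) (t : ℝ) :
    Convex ℝ (piDSublevel Dset p t) := by
  rintro x₁ ⟨a₁, ha₁, hx₁⟩ x₂ ⟨a₂, ha₂, hx₂⟩ θ₁ θ₂ hθ₁ hθ₂ hθ
  refine ⟨θ₁ * a₁ + θ₂ * a₂, ?_, ?_⟩
  · calc θ₁ * a₁ + θ₂ * a₂ ≤ θ₁ * t + θ₂ * t := by gcongr
      _ = t := by rw [← add_mul, hθ, one_mul]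
  · convert hconv hx₁ hx₂ hθ₁ hθ₂ hθ using 1
    module

theorem piD_le {c : E} {a : ℝ} (h : c - a • p ∈ Dset) : piD Dset p c ≤ a :=
  iInf_le (fun a : {a : ℝ // c - a • p ∈ Dset} => (a.1 : EReal)) ⟨a, h⟩

theorem le_piD {c : E} {t : EReal} (h : ∀ a : ℝ, c - a • p ∈ Dset → t ≤ a) :
    t ≤ piD Dset p c :=
  le_iInf fun a => h a.1 a.2

theorem piD_le_of_mem_piDSublevel {c : E} {t : ℝ} (hc : c ∈ piDSublevel Dset p t) :
    piD Dset p c ≤ t := by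
  obtain ⟨a, hat, ha⟩ := hc
  exact (piD_le ha).trans (EReal.coe_le_coe_iff.2 hat)

theorem le_piD_of_notMem_piDSublevel {c : E} {t : ℝ} (hc : c ∉ piDSublevel Dset p t) :
    (t : EReal) ≤ piD Dset p c :=
  le_piD fun a ha => EReal.coe_le_coe_iff.2 (le_of_not_ge fun hat => hc ⟨a, hat, ha⟩)

theorem piD_zero_eq_bot_iff (hconv : Convex ℝ Dset) (hzero : (0 : E) ∈ Dset) :
    piD Dset p 0 = ⊥ ↔ ∀ a : ℝ, 0 < a → a • p ∈ Dset := by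
  rw [EReal.eq_bot_iff_forall_lt]
  constructor
  · intro h a ha
    obtain ⟨⟨b, hb⟩, hba⟩ := iInf_lt_iff.1 (h (-a))
    have hba : b < -a := EReal.coe_lt_coe_iff.1 hba
    rw [zero_sub, ← neg_smul] at hb
    have := hconv.smul_mem_of_zero_mem hzero hb (t := a / -b)
      ⟨by bound, (div_le_one (by linarith)).2 (by linarith)⟩
    rwa [smul_smul, div_mul_cancel₀ _ (by linarith)] at this
  · intro h y
    refine (piD_le (a := -(|y| + 1)) ?_).trans_lt (EReal.coe_lt_coe_iff.2 ?_)
    · rw [zero_sub, neg_smul, neg_neg]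
      exact h (|y| + 1) (by positivity)
    · linarith [neg_abs_le y]

end Module

section TopologicalVectorSpace

variable {X : Type*} [TopologicalSpace X] [AddCommGroup X] [Module ℝ X]
  [IsTopologicalAddGroup X] [ContinuousSMul ℝ X]

theorem mem_recCone_iff_forall_smul_mem {s : Set X} (hs : IsClosed s) (hconv : Convex ℝ s)
    (hzero : (0 : X) ∈ s) {z : X} : z ∈ recCone s ↔ ∀ a : ℝ, 0 < a → a • z ∈ s := by
  refine ⟨fun hz a ha => by simpa using hz 0 hzero a ha, fun hz d hd a ha => ?_⟩
  -- `d + a • z` is the limit of the convex combinations `(1 - l) • d + l • ((a / l) • z)`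
  have hlim : Tendsto (fun l : ℝ => (1 - l) • d + a • z) (𝓝[>] 0) (𝓝 (d + a • z)) := by
    have : Continuous fun l : ℝ => (1 - l) • d + a • z := by fun_prop
    simpa using (this.tendsto 0).mono_left nhdsWithin_le_nhds
  refine hs.mem_of_tendsto hlim ?_
  filter_upwards [Ioo_mem_nhdsGT one_pos] with l ⟨hl0, hl1⟩
  have := hconv hd (hz (a / l) (by positivity)) (sub_nonneg.2 hl1.le) hl0.le (by ring)
  rwa [smul_smul, mul_div_cancel₀ _ hl0.ne'] at this

theorem isClosed_piDSublevel {D : Set X} (hD : IsClosed D) {p : X} {f : StrongDual ℝ X}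
    (hfp : f p = 1) {M : ℝ} (hfD : ∀ d ∈ D, f d ≤ M) (t : ℝ) :
    IsClosed (piDSublevel D p t) := by
  refine isOpen_compl_iff.1 (isOpen_iff_mem_nhds.2 fun x hx => ?_)
  -- near `x`, only shifts in the compact interval `[f x - M - 1, t]` can witness membership
  set K := (· • p) '' Icc (f x - M - 1) t
  have hK : IsClosed (D + K) := hD.add_right_of_isCompact (isCompact_Icc.image (by fun_prop))
  have hxK : x ∉ D + K := by
    rintro ⟨d, hd, _, ⟨a, ⟨-, hat⟩, rfl⟩, rfl⟩
    exact hx ⟨a, hat, by rwa [add_sub_cancel_right]⟩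
  filter_upwards [hK.isOpen_compl.mem_nhds hxK,
    f.continuous.continuousAt.eventually (lt_mem_nhds (sub_one_lt (f x)))]
    with y hyK hy ⟨a, hat, ha⟩
  have : f y - a ≤ M := by simpa [hfp] using hfD _ ha
  exact hyK ⟨y - a • p, ha, a • p, ⟨a, ⟨by linarith, hat⟩, rfl⟩, sub_add_cancel y _⟩

end TopologicalVectorSpace

section Pairing

variable {E F : Type*} [AddCommGroup E] [Module ℝ E] [AddCommGroup F] [Module ℝ F]
  (B : E →ₗ[ℝ] F →ₗ[ℝ] ℝ) {Dset : Set E} {p : E}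

theorem le_sigmaD {d : E} (hd : d ∈ Dset) (q : F) : (B d q : EReal) ≤ sigmaD B Dset q :=
  le_iSup (fun c : Dset => ((B c.1 q : ℝ) : EReal)) ⟨d, hd⟩

theorem sigmaD_le {q : F} {m : ℝ} (h : ∀ d ∈ Dset, B d q ≤ m) : sigmaD B Dset q ≤ m :=
  iSup_le fun d => EReal.coe_le_coe_iff.2 (h d.1 d.2)

theorem exists_forall_le_of_sigmaD_ne_top {q : F} (h : sigmaD B Dset q ≠ ⊤) :
    ∃ M : ℝ, ∀ d ∈ Dset, B d q ≤ M :=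
  ⟨(sigmaD B Dset q).toReal, fun _ hd =>
    EReal.coe_le_coe_iff.1 ((le_sigmaD B hd q).trans (EReal.le_coe_toReal h))⟩

theorem sub_sigmaD_le_piD {q : F} (hpq : B p q = 1) (c : E) :
    (B c q : EReal) - sigmaD B Dset q ≤ piD Dset p c := le_piD fun a ha => by
  have h : ((B c q - a : ℝ) : EReal) ≤ sigmaD B Dset q := by simpa [hpq] using le_sigmaD B ha q
  calc (B c q : EReal) - sigmaD B Dset q ≤ B c q - ((B c q - a : ℝ) : EReal) :=
        EReal.sub_le_sub le_rfl h
    _ = a := by rw [← EReal.coe_sub, sub_sub_cancel]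

theorem piD_ne_bot {q : F} (hσ : sigmaD B Dset q ≠ ⊤) (hpq : B p q = 1) (c : E) :
    piD Dset p c ≠ ⊥ := by
  obtain ⟨M, hM⟩ := exists_forall_le_of_sigmaD_ne_top B hσ
  refine ne_bot_of_le_ne_bot (EReal.coe_ne_bot (B c q - M)) ?_
  calc ((B c q - M : ℝ) : EReal) ≤ B c q - sigmaD B Dset q := by
        rw [EReal.coe_sub]; exact EReal.sub_le_sub le_rfl (sigmaD_le B hM)
    _ ≤ piD Dset p c := sub_sigmaD_le_piD B hpq c

theorem exists_pairing_eq_one_of_pos {q : F} (hq : 0 < B p q) {m : ℝ}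
    (hm : ∀ d ∈ Dset, B d q ≤ m) :
    ∃ q' : F, B p q' = 1 ∧ sigmaD B Dset q' ≤ ((m / B p q : ℝ) : EReal) ∧
      ∀ c : E, B c q' = B c q / B p q := by
  refine ⟨(B p q)⁻¹ • q, ?_, sigmaD_le B fun d hd => ?_, fun c => ?_⟩ <;>
    simp only [map_smul, smul_eq_mul, inv_mul_eq_div]
  · exact div_self hq.ne'
  · exact div_le_div_of_nonneg_right (hm d hd) hq.le

theorem exists_forall_lt_of_notMem_weakBilin {s : Set E} (hconv : Convex ℝ s)
    (hclosed : IsClosed {c : WeakBilin B | c ∈ s}) {c : E} (hc : c ∉ s) :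
    ∃ (q : F) (u : ℝ), (∀ x ∈ s, B x q < u) ∧ u < B c q := by
  obtain ⟨f, u, hf, hfc⟩ := geometric_hahn_banach_closed_point (E := WeakBilin B) hconv hclosed hc
  obtain ⟨q, rfl⟩ := LinearMap.dualEmbedding_surjective B f
  exact ⟨q, u, hf, hfc⟩


theorem exists_sigmaD_ne_top_iff (hclosed : IsClosed {c : WeakBilin B | c ∈ Dset})
    (hconv : Convex ℝ Dset) (hzero : (0 : E) ∈ Dset) :
    (∃ q : F, sigmaD B Dset q ≠ ⊤ ∧ B p q = 1) ↔ ¬∀ a : ℝ, 0 < a → a • p ∈ Dset := by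
  constructor
  · rintro ⟨q, hσ, hpq⟩ hray
    obtain ⟨M, hM⟩ := exists_forall_le_of_sigmaD_ne_top B hσ
    have := hM _ (hray (max M 0 + 1) (by positivity))
    simp only [map_smul, LinearMap.smul_apply, hpq, smul_eq_mul, mul_one] at this
    linarith [le_max_left M 0]
  · intro hray
    obtain ⟨a, ha, hap⟩ := not_forall₂.1 hray
    obtain ⟨q, u, hDu, hpu⟩ := exists_forall_lt_of_notMem_weakBilin B hconv hclosed hap
    have hu : 0 < u := by simpa using hDu 0 hzero
    have hq : 0 < B p q := by
      simp only [map_smul, LinearMap.smul_apply, smul_eq_mul] at hpu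
      exact pos_of_mul_pos_right (hu.trans hpu) ha.le
    obtain ⟨q', hpq', hσ', -⟩ := exists_pairing_eq_one_of_pos B hq fun d hd => (hDu d hd).le
    exact ⟨q', ne_top_of_le_ne_top (EReal.coe_ne_top _) hσ', hpq'⟩

theorem lowerSemicontinuous_piD (hclosed : IsClosed {c : WeakBilin B | c ∈ Dset}) {q : F}
    (hσ : sigmaD B Dset q ≠ ⊤) (hpq : B p q = 1) :
    LowerSemicontinuous fun c : WeakBilin B => piD Dset p c := by
  obtain ⟨M, hM⟩ := exists_forall_le_of_sigmaD_ne_top B hσ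
  intro x y hy
  obtain ⟨t, hyt, htx⟩ := EReal.exists_between_coe_real hy
  have hx : x ∉ piDSublevel Dset p t := fun hx => (piD_le_of_mem_piDSublevel (E := E) hx).not_gt htx
  have hopen := (isClosed_piDSublevel (X := WeakBilin B) hclosed (f := WeakBilin.eval B q) hpq hM t).isOpen_compl
  filter_upwards [hopen.mem_nhds hx] with c hc
  exact hyt.trans_le (le_piD_of_notMem_piDSublevel hc)

theorem exists_lt_sub_sigmaD_of_notMem_piDSublevel
    (hclosed : IsClosed {c : WeakBilin B | c ∈ Dset}) (hconv : Convex ℝ Dset)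
    (hzero : (0 : E) ∈ Dset) {qs : F} {M : ℝ} (hM : ∀ d ∈ Dset, B d qs ≤ M)
    (hpqs : B p qs = 1) {c : E} {t : ℝ} (hc : c ∉ piDSublevel Dset p t) :
    ∃ q : F, B p q = 1 ∧ (t : EReal) < B c q - sigmaD B Dset q := by
  obtain ⟨q₀, u, hq₀, hcu⟩ := exists_forall_lt_of_notMem_weakBilin B (convex_piDSublevel hconv t)
    (isClosed_piDSublevel (X := WeakBilin B) hclosed (f := WeakBilin.eval B qs) hpqs hM t) hc
  have hL : ∀ d ∈ Dset, ∀ a ≤ t, B d q₀ + a * B p q₀ < u := fun d hd a ha => by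
    simpa using hq₀ (d + a • p) ⟨a, ha, by simpa using hd⟩
  have hβ : 0 ≤ B p q₀ := by
    by_contra! hβ
    have h₁ := hL 0 hzero (min t (u / B p q₀)) (min_le_left _ _)
    have h₂ := mul_le_mul_of_nonpos_right (min_le_right t (u / B p q₀)) hβ.le
    rw [div_mul_cancel₀ _ hβ.ne] at h₂
    simp only [map_zero, LinearMap.zero_apply, zero_add] at h₁
    linarith
  -- tilt `qs` towards `q₀` far enough to beat `t` at `c`, then renormalize
  obtain ⟨θ, hθ, hθc⟩ := exists_pos_lt_mul (sub_pos.2 hcu) (t + M - B c qs)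
  set q := qs + θ • q₀
  have hpq : 0 < B p q := by
    simp only [q, map_add, map_smul, smul_eq_mul, hpqs]
    positivity
  obtain ⟨q', hpq', hσ, hcq⟩ := exists_pairing_eq_one_of_pos B hpq
    (m := M + θ * (u - t * B p q₀)) fun d hd => by
      simp only [q, map_add, map_smul, smul_eq_mul]
      nlinarith [hM d hd, hL d hd t le_rfl]
  refine ⟨q', hpq', ?_⟩
  calc (t : EReal) < ((B c q / B p q - (M + θ * (u - t * B p q₀)) / B p q : ℝ) : EReal) := by
        rw [EReal.coe_lt_coe_iff, ← sub_div, lt_div_iff₀ hpq]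
        simp only [q, map_add, map_smul, smul_eq_mul, hpqs]
        nlinarith
    _ ≤ B c q' - sigmaD B Dset q' := by
        rw [EReal.coe_sub, hcq]
        exact EReal.sub_le_sub le_rfl hσ

theorem piD_eq_iSup (hclosed : IsClosed {c : WeakBilin B | c ∈ Dset}) (hconv : Convex ℝ Dset)
    (hzero : (0 : E) ∈ Dset) {qs : F} (hσ : sigmaD B Dset qs ≠ ⊤) (hpqs : B p qs = 1) (c : E) :
    piD Dset p c = ⨆ q : {q : F // B p q = 1}, ((B c q.1 : EReal) - sigmaD B Dset q.1) := by
  obtain ⟨M, hM⟩ := exists_forall_le_of_sigmaD_ne_top B hσ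
  refine le_antisymm (le_of_forall_lt fun y hy => ?_) (iSup_le fun q => sub_sigmaD_le_piD B q.2 c)
  obtain ⟨t, hyt, htc⟩ := EReal.exists_between_coe_real hy
  have hc : c ∉ piDSublevel Dset p t := fun h => (piD_le_of_mem_piDSublevel h).not_gt htc
  obtain ⟨q, hpq, hq⟩ :=
    exists_lt_sub_sigmaD_of_notMem_piDSublevel B hclosed hconv hzero hM hpqs hc
  exact hyt.trans (hq.trans_le
    (le_iSup (fun q : {q : F // B p q = 1} => (B c q.1 : EReal) - sigmaD B Dset q.1) ⟨q, hpq⟩))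

end Pairing

theorem piD_duality_general
    {E F : Type*} [AddCommGroup E] [Module ℝ E] [AddCommGroup F] [Module ℝ F]
    (B : E →ₗ[ℝ] F →ₗ[ℝ] ℝ)
    (Dset : Set E)
    (hclosed : IsClosed {c : WeakBilin B | c ∈ Dset})
    (hconvex : Convex ℝ Dset) (hzero : (0 : E) ∈ Dset) (p : E) :
    -- (1) ↔ (2)
    ((((∀ c : E, piD Dset p c ≠ ⊥) ∧ (∃ c : E, piD Dset p c ≠ ⊤)) ∧
        LowerSemicontinuous fun c : WeakBilin B => piD Dset p c) ↔
      piD Dset p 0 ≠ ⊥) ∧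
    -- (2) ↔ (3)
    ((piD Dset p 0 ≠ ⊥) ↔ p ∉ recCone Dset) ∧
    -- (3) ↔ (4)
    ((p ∉ recCone Dset) ↔ ∃ q : F, sigmaD B Dset q ≠ ⊤ ∧ B p q = 1) ∧
    -- the dual representation
    ((piD Dset p 0 ≠ ⊥) →
      ∀ c : E, piD Dset p c =
        ⨆ q : {q : F // B p q = 1},
          (((B c q.1 : ℝ) : EReal) - sigmaD B Dset q.1)) := by
  have hrec : p ∈ recCone Dset ↔ ∀ a : ℝ, 0 < a → a • p ∈ Dset :=
    mem_recCone_iff_forall_smul_mem (X := WeakBilin B) hclosed hconvex hzero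
  have h23 : piD Dset p 0 ≠ ⊥ ↔ p ∉ recCone Dset :=
    (piD_zero_eq_bot_iff hconvex hzero).trans hrec.symm |>.not
  have h34 : p ∉ recCone Dset ↔ ∃ q : F, sigmaD B Dset q ≠ ⊤ ∧ B p q = 1 :=
    hrec.not.trans (exists_sigmaD_ne_top_iff B hclosed hconvex hzero).symm
  have h24 := h23.trans h34
  refine ⟨⟨fun h => h.1.1 0, fun h0 => ?_⟩, h23, h34, fun h0 => ?_⟩
  · obtain ⟨q, hσ, hpq⟩ := h24.1 h0
    have hfinite : piD Dset p 0 ≠ ⊤ :=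
      ne_top_of_le_ne_top EReal.zero_ne_top (piD_le (a := 0) (by simpa using hzero))
    exact ⟨⟨piD_ne_bot B hσ hpq, 0, hfinite⟩, lowerSemicontinuous_piD B hclosed hσ hpq⟩
  · obtain ⟨q, hσ, hpq⟩ := h24.1 h0
    exact piD_eq_iSup B hclosed hconvex hzero hσ hpq

/-- Lemma A.3 / `lem:piD`: for a weakly closed convex set `D ∋ 0` in a
separating duality `⟨E,F⟩`, the conditions (1)–(4) on `π(c) = inf{α | c − αp ∈ D}` are
equivalent and imply the dual representation of `π`. -/
theorem piD_duality
    {E F : Type*} [AddCommGroup E] [Module ℝ E] [AddCommGroup F] [Module ℝ F]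
    (B : E →ₗ[ℝ] F →ₗ[ℝ] ℝ)
    (hsep₁ : ∀ c : E, c ≠ 0 → ∃ q : F, B c q ≠ 0)
    (hsep₂ : ∀ q : F, q ≠ 0 → ∃ c : E, B c q ≠ 0)
    (Dset : Set E)
    (hclosed : IsClosed {c : WeakBilin B | c ∈ Dset})
    (hconvex : Convex ℝ Dset) (hzero : (0 : E) ∈ Dset) (p : E) :
    -- (1) ↔ (2)
    ((((∀ c : E, piD Dset p c ≠ ⊥) ∧ (∃ c : E, piD Dset p c ≠ ⊤)) ∧
        LowerSemicontinuous fun c : WeakBilin B => piD Dset p c) ↔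
      piD Dset p 0 ≠ ⊥) ∧
    -- (2) ↔ (3)
    ((piD Dset p 0 ≠ ⊥) ↔ p ∉ recCone Dset) ∧
    -- (3) ↔ (4)
    ((p ∉ recCone Dset) ↔ ∃ q : F, sigmaD B Dset q ≠ ⊤ ∧ B p q = 1) ∧
    -- the dual representation
    ((piD Dset p 0 ≠ ⊥) →
      ∀ c : E, piD Dset p c =
        ⨆ q : {q : F // B p q = 1},
          (((B c q.1 : ℝ) : EReal) - sigmaD B Dset q.1)) :=
  piD_duality_general B Dset hclosed hconvex hzero p

end IlliquidALM
end
end
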